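/- Let v₁,…,v₂₄ ∈ ℝ⁴ be the 24 vectors 2e_i (1 ≤ i ≤ 4), √2·(e_i + e_j) and √2·(e_i − e_j) (1 ≤ i < j ≤ 4), and e₁ + ε₂e₂ + ε₃e₃ + ε₄e₄ (ε₂,ε₃,ε₄ ∈ {±1}). Then each v_j has norm 2, the configuration is an equal-norm spherical (3,3)-design for ℝ⁴, i.e. Σ_{j=1}^{24} Σ_{k=1}^{24} |⟨v_j,v_k⟩|⁶ = (5/64)·(Σ_{ℓ=1}^{24} ‖v_ℓ‖⁶)², and the normalized angles |⟨v_j,v_k⟩|/4 over the 276 unordered pairs j < k take exactly the values 0 (108 times), 1/√2 (72 times), and 1/2 (96 times). -/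

import Mathlib

open Real

/-- The `24` vectors `2eᵢ`, `√2(eᵢ ± eⱼ)` (`i < j`), and `e₁ ± e₂ ± e₃ ± e₄` in `ℝ⁴`
of Kempner's equal-norm `24`-point spherical `(3,3)`-design. -/
noncomputable def v : Fin 24 → Fin 4 → ℝ :=
  ![![2, 0, 0, 0], ![0, 2, 0, 0], ![0, 0, 2, 0], ![0, 0, 0, 2],
    ![Real.sqrt 2, Real.sqrt 2, 0, 0], ![Real.sqrt 2, 0, Real.sqrt 2, 0],
    ![Real.sqrt 2, 0, 0, Real.sqrt 2], ![0, Real.sqrt 2, Real.sqrt 2, 0],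
    ![0, Real.sqrt 2, 0, Real.sqrt 2], ![0, 0, Real.sqrt 2, Real.sqrt 2],
    ![Real.sqrt 2, -Real.sqrt 2, 0, 0], ![Real.sqrt 2, 0, -Real.sqrt 2, 0],
    ![Real.sqrt 2, 0, 0, -Real.sqrt 2], ![0, Real.sqrt 2, -Real.sqrt 2, 0],
    ![0, Real.sqrt 2, 0, -Real.sqrt 2], ![0, 0, Real.sqrt 2, -Real.sqrt 2],
    ![1, 1, 1, 1], ![1, 1, 1, -1], ![1, 1, -1, 1], ![1, 1, -1, -1],
    ![1, -1, 1, 1], ![1, -1, 1, -1], ![1, -1, -1, 1], ![1, -1, -1, -1]]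

/-! All coordinates lie in `ℤ[√2]`, so each inner product `⟨v_j, v_k⟩` is the image of an
exact Gram entry in `ℤ√2` under the evaluation `√d ↦ √2`, which is injective because `2` is not
a square. Since `x⁶ = |x|⁶` and `|x| / 4` is determined by `x²`, the design identity and the
angle conditions become equations in `ℤ√2` (the angles `0`, `1/√2`, `1/2` correspond to squared
Gram entries `0`, `8`, `4`), which are finite computations checked by the kernel. -/

noncomputable def sqrtTwoHom : ℤ√2 →+* ℝ := Zsqrtd.lift ⟨√2, Real.mul_self_sqrt zero_le_two⟩

theorem sqrtTwoHom_injective : Function.Injective sqrtTwoHom :=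
  Zsqrtd.lift_injective _ fun n h => Int.prime_two.not_isSquare ⟨n, h⟩

@[simp] theorem sqrtTwoHom_sqrtd : sqrtTwoHom Zsqrtd.sqrtd = √2 := by simp [sqrtTwoHom]

theorem abs_div_eq_iff_sq_eq {x a c : ℝ} (ha : 0 < a) (hc : 0 ≤ c) :
    |x| / a = c ↔ x ^ 2 = (a * c) ^ 2 := by
  rw [div_eq_iff ha.ne', sq_eq_sq_iff_abs_eq_abs, abs_of_nonneg (by positivity : 0 ≤ a * c),
    mul_comm]

theorem abs_sqrtTwoHom_div_eq_iff {z n : ℤ√2} {a c : ℝ} (ha : 0 < a) (hc : 0 ≤ c)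
    (hn : sqrtTwoHom n = (a * c) ^ 2) : |sqrtTwoHom z| / a = c ↔ z ^ 2 = n := by
  rw [abs_div_eq_iff_sq_eq ha hc, ← hn, ← map_pow, sqrtTwoHom_injective.eq_iff]

def kempnerZ : Fin 24 → Fin 4 → ℤ√2 :=
  let s : ℤ√2 := Zsqrtd.sqrtd
  ![![2, 0, 0, 0], ![0, 2, 0, 0], ![0, 0, 2, 0], ![0, 0, 0, 2],
    ![s, s, 0, 0], ![s, 0, s, 0], ![s, 0, 0, s], ![0, s, s, 0], ![0, s, 0, s], ![0, 0, s, s],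
    ![s, -s, 0, 0], ![s, 0, -s, 0], ![s, 0, 0, -s], ![0, s, -s, 0], ![0, s, 0, -s], ![0, 0, s, -s],
    ![1, 1, 1, 1], ![1, 1, 1, -1], ![1, 1, -1, 1], ![1, 1, -1, -1],
    ![1, -1, 1, 1], ![1, -1, 1, -1], ![1, -1, -1, 1], ![1, -1, -1, -1]]

theorem v_eq_sqrtTwoHom (j : Fin 24) (i : Fin 4) : v j i = sqrtTwoHom (kempnerZ j i) := by
  fin_cases j <;> fin_cases i <;> simp [v, kempnerZ, map_ofNat]

def gram (j k : Fin 24) : ℤ√2 := ∑ i, kempnerZ j i * kempnerZ k i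

theorem inner_v_eq_sqrtTwoHom_gram (j k : Fin 24) :
    ∑ i, v j i * v k i = sqrtTwoHom (gram j k) := by
  simp only [gram, map_sum, map_mul, v_eq_sqrtTwoHom]

theorem gram_self (j : Fin 24) : gram j j = 4 := by
  revert j
  decide

theorem sum_v_sq (j : Fin 24) : ∑ i, v j i ^ 2 = 4 := by
  simp only [sq, inner_v_eq_sqrtTwoHom_gram, gram_self, map_ofNat]

theorem sum_sum_gram_pow_six : ∑ j, ∑ k, gram j k ^ 6 = 184320 := by
  decide

theorem sum_sum_abs_inner_v_pow_six :
    ∑ j, ∑ k, |∑ i, v j i * v k i| ^ 6 = 184320 := by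
  simp only [inner_v_eq_sqrtTwoHom_gram, Even.pow_abs ⟨3, rfl⟩, ← map_pow, ← map_sum,
    sum_sum_gram_pow_six, map_ofNat]

abbrev increasingPairs : Finset (Fin 24 × Fin 24) := Finset.univ.filter fun p => p.1 < p.2

theorem card_filter_gram_sq_eq_zero :
    (increasingPairs.filter fun p => gram p.1 p.2 ^ 2 = 0).card = 108 := by
  decide +kernel

theorem card_filter_gram_sq_eq_eight :
    (increasingPairs.filter fun p => gram p.1 p.2 ^ 2 = 8).card = 72 := by
  decide +kernel

theorem card_filter_gram_sq_eq_four :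
    (increasingPairs.filter fun p => gram p.1 p.2 ^ 2 = 4).card = 96 := by
  decide +kernel

theorem gram_sq_of_mem_increasingPairs : ∀ p ∈ increasingPairs,
    gram p.1 p.2 ^ 2 = 0 ∨ gram p.1 p.2 ^ 2 = 8 ∨ gram p.1 p.2 ^ 2 = 4 := by
  decide +kernel

open Classical in
/-- Kempner's `24` vectors all have norm `2`, they form an equal-norm spherical
`(3,3)`-design for `ℝ⁴` (`Σ_j Σ_k |⟨v_j,v_k⟩|⁶ = (5/64)(Σ_ℓ ‖v_ℓ‖⁶)²`), and the
normalized angles `|⟨v_j,v_k⟩|/4` over the `276` unordered pairs take exactly the values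
`0` (108 times), `1/√2` (72 times) and `1/2` (96 times). -/
theorem kempner_design :
    (∀ j, Real.sqrt (∑ i, v j i ^ 2) = 2) ∧
    (∑ j : Fin 24, ∑ k : Fin 24, |∑ i, v j i * v k i| ^ 6 =
      (5/64 : ℝ) * (∑ l : Fin 24, (∑ i, v l i ^ 2) ^ 3) ^ 2) ∧
    (((Finset.univ.filter fun p : Fin 24 × Fin 24 => p.1 < p.2).filter
        fun p => |∑ i, v p.1 i * v p.2 i| / 4 = 0).card = 108 ∧
     ((Finset.univ.filter fun p : Fin 24 × Fin 24 => p.1 < p.2).filter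
        fun p => |∑ i, v p.1 i * v p.2 i| / 4 = 1 / Real.sqrt 2).card = 72 ∧
     ((Finset.univ.filter fun p : Fin 24 × Fin 24 => p.1 < p.2).filter
        fun p => |∑ i, v p.1 i * v p.2 i| / 4 = 1/2).card = 96 ∧
     ∀ p ∈ Finset.univ.filter fun p : Fin 24 × Fin 24 => p.1 < p.2,
       |∑ i, v p.1 i * v p.2 i| / 4 = 0 ∨
       |∑ i, v p.1 i * v p.2 i| / 4 = 1 / Real.sqrt 2 ∨
       |∑ i, v p.1 i * v p.2 i| / 4 = 1/2) := by
  have angle_zero (z : ℤ√2) : |sqrtTwoHom z| / 4 = 0 ↔ z ^ 2 = 0 :=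
    abs_sqrtTwoHom_div_eq_iff four_pos le_rfl (by simp)
  have angle_inv_sqrt_two (z : ℤ√2) : |sqrtTwoHom z| / 4 = 1 / √2 ↔ z ^ 2 = 8 :=
    abs_sqrtTwoHom_div_eq_iff four_pos (by positivity) (by
      rw [map_ofNat, mul_one_div, div_pow, sq_sqrt zero_le_two]; norm_num)
  have angle_half (z : ℤ√2) : |sqrtTwoHom z| / 4 = 1 / 2 ↔ z ^ 2 = 4 :=
    abs_sqrtTwoHom_div_eq_iff four_pos (by norm_num) (by rw [map_ofNat]; norm_num)
  refine ⟨fun j => ?_, ?_, ?_⟩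
  · rw [sum_v_sq, show (4 : ℝ) = 2 ^ 2 by norm_num, sqrt_sq zero_le_two]
  · simp only [sum_sum_abs_inner_v_pow_six, sum_v_sq]
    norm_num
  · simp only [inner_v_eq_sqrtTwoHom_gram, angle_zero, angle_inv_sqrt_two, angle_half]
    exact ⟨card_filter_gram_sq_eq_zero, card_filter_gram_sq_eq_eight,
      card_filter_gram_sq_eq_four, gram_sq_of_mem_increasingPairs⟩
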